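/- The inner angular values satisfy θ_s^{liminf,inf} ≤ θ_s^{limsup,inf}, θ_s^{liminf,inf} ≤ θ_s^{liminf,sup}, θ_s^{limsup,inf} ≤ θ_s^{limsup,sup}, θ_s^{liminf,sup} ≤ θ_s^{limsup,sup}. Moreover, the outer angular spectrum Σ_s^{out} and the four inner angular values are contained in the inner angular spectrum Σ_s^{in}, and Σ_s^{in} ⊆ [θ_s^{liminf,inf}, θ_s^{limsup,sup}]. If in addition θ_s^{liminf,inf} = θ_s^{limsup,inf} and θ_s^{liminf,sup} = θ_s^{limsup,sup}, then Σ_s^{in} = [θ_s^{liminf,inf}, θ_s^{limsup,sup}]. -/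

import Mathlib

open scoped RealInnerProductSpace ENNReal
open Filter

noncomputable section

/-- `d`-dimensional Euclidean space `ℝ^d`. -/
abbrev Euc (d : ℕ) := EuclideanSpace ℝ (Fin d)

/-- Bounded linear operators on `ℝ^d` (i.e. `d × d` matrices, with the operator norm). -/
abbrev Op (d : ℕ) := Euc d →L[ℝ] Euc d

/-- The maximal principal angle between two subspaces of `ℝ^d`,
`∠(V,W) = arccos( min_{v ∈ V, ‖v‖=1} max_{w ∈ W, ‖w‖=1} vᵀw )`. -/
def subAngle {d : ℕ} (V W : Submodule ℝ (Euc d)) : ℝ :=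
  Real.arccos (sInf {x : ℝ | ∃ v ∈ V, ‖v‖ = 1 ∧
    x = sSup {y : ℝ | ∃ w ∈ W, ‖w‖ = 1 ∧ y = ⟪v, w⟫}})

/-- The solution operator `Φ(n,0) = A_{n-1} ⋯ A_0` of the system `u_{n+1} = A_n u_n`. -/
def PhiN {d : ℕ} (A : ℕ → Euc d ≃L[ℝ] Euc d) : ℕ → Euc d ≃L[ℝ] Euc d
  | 0 => ContinuousLinearEquiv.refl ℝ (Euc d)
  | n + 1 => (PhiN A n).trans (A n)

/-- The average of principal angles between successive subspaces,
`α_n(V) = (1/n) Σ_{j=1}^n ∠(Φ(j-1,0)V, Φ(j,0)V)`. -/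
def alphaAvg {d : ℕ} (A : ℕ → Euc d ≃L[ℝ] Euc d)
    (V : Submodule ℝ (Euc d)) (n : ℕ) : ℝ :=
  (n : ℝ)⁻¹ * ∑ j ∈ Finset.range n,
    subAngle (V.map ((PhiN A j : Op d) : Euc d →ₗ[ℝ] Euc d))
      (V.map ((PhiN A (j + 1) : Op d) : Euc d →ₗ[ℝ] Euc d))

/-- Outer angular value `θ_s^{sup,limsup} = sup_{V ∈ G(s,d)} limsup_n α_n(V)`. -/
def thSupLimsup {d : ℕ} (A : ℕ → Euc d ≃L[ℝ] Euc d) (s : ℕ) : ℝ :=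
  sSup {x : ℝ | ∃ V : Submodule ℝ (Euc d), Module.finrank ℝ V = s ∧
    x = limsup (alphaAvg A V) atTop}

/-- Outer angular value `θ_s^{sup,liminf} = sup_{V ∈ G(s,d)} liminf_n α_n(V)`. -/
def thSupLiminf {d : ℕ} (A : ℕ → Euc d ≃L[ℝ] Euc d) (s : ℕ) : ℝ :=
  sSup {x : ℝ | ∃ V : Submodule ℝ (Euc d), Module.finrank ℝ V = s ∧
    x = liminf (alphaAvg A V) atTop}

/-- Outer angular value `θ_s^{inf,limsup} = inf_{V ∈ G(s,d)} limsup_n α_n(V)`. -/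
def thInfLimsup {d : ℕ} (A : ℕ → Euc d ≃L[ℝ] Euc d) (s : ℕ) : ℝ :=
  sInf {x : ℝ | ∃ V : Submodule ℝ (Euc d), Module.finrank ℝ V = s ∧
    x = limsup (alphaAvg A V) atTop}

/-- Outer angular value `θ_s^{inf,liminf} = inf_{V ∈ G(s,d)} liminf_n α_n(V)`. -/
def thInfLiminf {d : ℕ} (A : ℕ → Euc d ≃L[ℝ] Euc d) (s : ℕ) : ℝ :=
  sInf {x : ℝ | ∃ V : Submodule ℝ (Euc d), Module.finrank ℝ V = s ∧
    x = liminf (alphaAvg A V) atTop}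

/-- The outer angular spectrum of dimension `s`:
`Σ_s = cl{θ ∈ [0,π/2] : ∃ V ∈ G(s,d), liminf α_n(V) ≤ θ ≤ limsup α_n(V)}`. -/
def angSpecN {d : ℕ} (A : ℕ → Euc d ≃L[ℝ] Euc d) (s : ℕ) : Set ℝ :=
  closure {θ : ℝ | 0 ≤ θ ∧ θ ≤ Real.pi / 2 ∧
    ∃ V : Submodule ℝ (Euc d), Module.finrank ℝ V = s ∧
      liminf (alphaAvg A V) atTop ≤ θ ∧ θ ≤ limsup (alphaAvg A V) atTop}

/-- `sup_{V ∈ G(s,d)} α_n(V)`. -/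
def innerSup {d : ℕ} (A : ℕ → Euc d ≃L[ℝ] Euc d) (s : ℕ) (n : ℕ) : ℝ :=
  sSup {x : ℝ | ∃ V : Submodule ℝ (Euc d), Module.finrank ℝ V = s ∧
    x = alphaAvg A V n}

/-- `inf_{V ∈ G(s,d)} α_n(V)`. -/
def innerInf {d : ℕ} (A : ℕ → Euc d ≃L[ℝ] Euc d) (s : ℕ) (n : ℕ) : ℝ :=
  sInf {x : ℝ | ∃ V : Submodule ℝ (Euc d), Module.finrank ℝ V = s ∧
    x = alphaAvg A V n}

/-- The inner angular spectrum
`Σ_s^{in} = cl{θ ∈ [0,π/2] : ∃ (V_n) in G(s,d), liminf α_n(V_n) ≤ θ ≤ limsup α_n(V_n)}`. -/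
def angSpecInN {d : ℕ} (A : ℕ → Euc d ≃L[ℝ] Euc d) (s : ℕ) : Set ℝ :=
  closure {θ : ℝ | 0 ≤ θ ∧ θ ≤ Real.pi / 2 ∧
    ∃ Vs : ℕ → Submodule ℝ (Euc d), (∀ n, Module.finrank ℝ (Vs n) = s) ∧
      liminf (fun n => alphaAvg A (Vs n) n) atTop ≤ θ ∧
      θ ≤ limsup (fun n => alphaAvg A (Vs n) n) atTop}

/-!
Write `S n = {α_n(V) : V ∈ G(s,d)} ⊆ [0, π/2]`. A sequence `(V_n)` amounts to a selection
`u n ∈ S n`, and the inner angular values are the liminf and limsup of `inf S n` and `sup S n`.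
Every selection is squeezed between `inf S n` and `sup S n`, which gives the bounds on the
spectrum. Conversely, a selection within `1/(n+1)` of `inf S n` (or of `sup S n`) has the same
liminf and limsup as that sequence, so each inner angular value is attained. If `inf S n → a`
and `sup S n → b`, alternating between two such selections produces one with liminf `≤ a` and
limsup `≥ b`, so all of `[a, b]` lies in the spectrum.
-/

open Set Topology

section BoundedSequences

variable {u v : ℕ → ℝ} {a b : ℝ}

lemma liminf_le_liminf_of_forall_le (ha : ∀ n, a ≤ u n) (hb : ∀ n, v n ≤ b)
    (h : ∀ n, u n ≤ v n) : liminf u atTop ≤ liminf v atTop :=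
  liminf_le_liminf (Eventually.of_forall h) (isBoundedUnder_of ⟨a, ha⟩)
    (isCoboundedUnder_ge_of_le atTop hb)

lemma limsup_le_limsup_of_forall_le (ha : ∀ n, a ≤ u n) (hb : ∀ n, v n ≤ b)
    (h : ∀ n, u n ≤ v n) : limsup u atTop ≤ limsup v atTop :=
  limsup_le_limsup (Eventually.of_forall h) (isCoboundedUnder_le_of_le atTop ha)
    (isBoundedUnder_of ⟨b, hb⟩)

lemma liminf_le_limsup_of_forall_mem_Icc (hu : ∀ n, u n ∈ Icc a b) :
    liminf u atTop ≤ limsup u atTop :=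
  liminf_le_limsup (isBoundedUnder_of ⟨b, fun n => (hu n).2⟩)
    (isBoundedUnder_of ⟨a, fun n => (hu n).1⟩)

lemma tendsto_liminf_of_liminf_eq_limsup (hu : ∀ n, u n ∈ Icc a b)
    (h : liminf u atTop = limsup u atTop) : Tendsto u atTop (𝓝 (liminf u atTop)) :=
  tendsto_of_liminf_eq_limsup rfl h.symm (isBoundedUnder_of ⟨b, fun n => (hu n).2⟩)
    (isBoundedUnder_of ⟨a, fun n => (hu n).1⟩)

lemma liminf_eq_of_tendsto_sub (hv : ∀ n, v n ∈ Icc a b) (h : Tendsto (u - v) atTop (𝓝 0)) :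
    liminf u atTop = liminf v atTop := by
  have hv_ge : IsBoundedUnder (· ≥ ·) atTop v := isBoundedUnder_of ⟨a, fun n => (hv n).1⟩
  have hv_co : IsCoboundedUnder (· ≥ ·) atTop v := isCoboundedUnder_ge_of_le atTop fun n => (hv n).2
  have hu : u = (u - v) + v := (sub_add_cancel u v).symm
  apply le_antisymm
  · calc liminf u atTop = liminf ((u - v) + v) atTop := by rw [← hu]
      _ ≤ limsup (u - v) atTop + liminf v atTop :=
        liminf_add_le h.isBoundedUnder_ge h.isBoundedUnder_le hv_ge hv_co
      _ = liminf v atTop := by rw [h.limsup_eq, zero_add]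
  · calc liminf v atTop = liminf (u - v) atTop + liminf v atTop := by rw [h.liminf_eq, zero_add]
      _ ≤ liminf ((u - v) + v) atTop :=
        le_liminf_add h.isBoundedUnder_ge h.isBoundedUnder_le hv_ge hv_co
      _ = liminf u atTop := by rw [← hu]

lemma limsup_eq_of_tendsto_sub (hv : ∀ n, v n ∈ Icc a b) (h : Tendsto (u - v) atTop (𝓝 0)) :
    limsup u atTop = limsup v atTop := by
  have hv_le : IsBoundedUnder (· ≤ ·) atTop v := isBoundedUnder_of ⟨b, fun n => (hv n).2⟩
  have hv_co : IsCoboundedUnder (· ≤ ·) atTop v := isCoboundedUnder_le_of_le atTop fun n => (hv n).1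
  have hu : u = v + (u - v) := (add_sub_cancel v u).symm
  apply le_antisymm
  · calc limsup u atTop = limsup ((u - v) + v) atTop := by rw [add_comm, ← hu]
      _ ≤ limsup (u - v) atTop + limsup v atTop :=
        limsup_add_le h.isBoundedUnder_ge h.isBoundedUnder_le hv_co hv_le
      _ = limsup v atTop := by rw [h.limsup_eq, zero_add]
  · calc limsup v atTop = limsup v atTop + liminf (u - v) atTop := by rw [h.liminf_eq, add_zero]
      _ ≤ limsup (v + (u - v)) atTop :=
        le_limsup_add hv_le hv_co h.isBoundedUnder_le h.isBoundedUnder_ge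
      _ = limsup u atTop := by rw [← hu]

lemma liminf_le_of_tendsto_comp {φ : ℕ → ℕ} {c : ℝ} (hφ : Tendsto φ atTop atTop)
    (hu : ∀ n, u n ∈ Icc a b) (h : Tendsto (u ∘ φ) atTop (𝓝 c)) : liminf u atTop ≤ c :=
  (hφ.liminf_le_liminf_comp (isCoboundedUnder_ge_of_le _ fun n => (hu n).2)
    (isBoundedUnder_of ⟨a, fun n => (hu n).1⟩)).trans_eq h.liminf_eq

lemma le_limsup_of_tendsto_comp {φ : ℕ → ℕ} {c : ℝ} (hφ : Tendsto φ atTop atTop)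
    (hu : ∀ n, u n ∈ Icc a b) (h : Tendsto (u ∘ φ) atTop (𝓝 c)) : c ≤ limsup u atTop :=
  h.limsup_eq.symm.trans_le (hφ.limsup_comp_le_limsup
    (isCoboundedUnder_le_of_le _ fun n => (hu n).1) (isBoundedUnder_of ⟨b, fun n => (hu n).2⟩))

end BoundedSequences

lemma csInf_mem_Icc_of_subset {T : Set ℝ} {a b : ℝ} (hne : T.Nonempty) (hT : T ⊆ Icc a b) :
    sInf T ∈ Icc a b :=
  ⟨le_csInf hne fun _ hx => (hT hx).1,
    (csInf_le (bddBelow_Icc.mono hT) hne.some_mem).trans (hT hne.some_mem).2⟩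

lemma csSup_mem_Icc_of_subset {T : Set ℝ} {a b : ℝ} (hne : T.Nonempty) (hT : T ⊆ Icc a b) :
    sSup T ∈ Icc a b :=
  ⟨(hT hne.some_mem).1.trans (le_csSup (bddAbove_Icc.mono hT) hne.some_mem),
    csSup_le hne fun _ hx => (hT hx).2⟩

def selectionSpectrum (S : ℕ → Set ℝ) : Set ℝ :=
  {θ | ∃ u : ℕ → ℝ, (∀ n, u n ∈ S n) ∧ liminf u atTop ≤ θ ∧ θ ≤ limsup u atTop}

namespace selectionSpectrum

variable {S : ℕ → Set ℝ} {a b : ℝ} {u : ℕ → ℝ}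

lemma subset_Icc (hS : ∀ n, S n ⊆ Icc a b) : selectionSpectrum S ⊆ Icc a b := by
  rintro θ ⟨u, hu, hlow, hup⟩
  exact ⟨(le_liminf_of_le (isCoboundedUnder_ge_of_le atTop fun n => (hS n (hu n)).2)
      (Eventually.of_forall fun n => (hS n (hu n)).1)).trans hlow,
    hup.trans (limsup_le_of_le (isCoboundedUnder_le_of_le atTop fun n => (hS n (hu n)).1)
      (Eventually.of_forall fun n => (hS n (hu n)).2))⟩

lemma subset_Icc_liminf_csInf_limsup_csSup (hS : ∀ n, S n ⊆ Icc a b) :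
    selectionSpectrum S ⊆
      Icc (liminf (fun n => sInf (S n)) atTop) (limsup (fun n => sSup (S n)) atTop) := by
  rintro θ ⟨u, hu, hlow, hup⟩
  exact ⟨(liminf_le_liminf_of_forall_le
      (fun n => (csInf_mem_Icc_of_subset ⟨u n, hu n⟩ (hS n)).1) (fun n => (hS n (hu n)).2)
      (fun n => csInf_le (bddBelow_Icc.mono (hS n)) (hu n))).trans hlow,
    hup.trans (limsup_le_limsup_of_forall_le (fun n => (hS n (hu n)).1)
      (fun n => (csSup_mem_Icc_of_subset ⟨u n, hu n⟩ (hS n)).2)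
      (fun n => le_csSup (bddAbove_Icc.mono (hS n)) (hu n)))⟩

lemma liminf_mem (hS : ∀ n, S n ⊆ Icc a b) (hu : ∀ n, u n ∈ S n) :
    liminf u atTop ∈ selectionSpectrum S :=
  ⟨u, hu, le_rfl, liminf_le_limsup_of_forall_mem_Icc fun n => hS n (hu n)⟩

lemma limsup_mem (hS : ∀ n, S n ⊆ Icc a b) (hu : ∀ n, u n ∈ S n) :
    limsup u atTop ∈ selectionSpectrum S :=
  ⟨u, hu, liminf_le_limsup_of_forall_mem_Icc fun n => hS n (hu n), le_rfl⟩

lemma exists_tendsto_sub_csInf (hne : ∀ n, (S n).Nonempty) (hbdd : ∀ n, BddBelow (S n)) :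
    ∃ u : ℕ → ℝ, (∀ n, u n ∈ S n) ∧ Tendsto (u - fun n => sInf (S n)) atTop (𝓝 0) := by
  have hclose n : ∃ x ∈ S n, x < sInf (S n) + 1 / ((n : ℝ) + 1) :=
    exists_lt_of_csInf_lt (hne n) (lt_add_of_pos_right _ Nat.one_div_pos_of_nat)
  choose u hu hlt using hclose
  refine ⟨u, hu, squeeze_zero (fun n => ?_) (fun n => ?_) tendsto_one_div_add_atTop_nhds_zero_nat⟩
  · exact sub_nonneg.2 (csInf_le (hbdd n) (hu n))
  · exact (sub_lt_iff_lt_add'.2 (hlt n)).le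

lemma exists_tendsto_sub_csSup (hne : ∀ n, (S n).Nonempty) (hbdd : ∀ n, BddAbove (S n)) :
    ∃ u : ℕ → ℝ, (∀ n, u n ∈ S n) ∧ Tendsto (u - fun n => sSup (S n)) atTop (𝓝 0) := by
  have hclose n : ∃ x ∈ S n, sSup (S n) - 1 / ((n : ℝ) + 1) < x :=
    exists_lt_of_lt_csSup (hne n) (sub_lt_self _ Nat.one_div_pos_of_nat)
  choose u hu hlt using hclose
  have hneg : Tendsto (fun n : ℕ => -(1 / ((n : ℝ) + 1))) atTop (𝓝 0) := by
    simpa using (tendsto_one_div_add_atTop_nhds_zero_nat (𝕜 := ℝ)).neg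
  refine ⟨u, hu, tendsto_of_tendsto_of_tendsto_of_le_of_le hneg tendsto_const_nhds
    (fun n => ?_) (fun n => sub_nonpos.2 (le_csSup (hbdd n) (hu n)))⟩
  linarith [hlt n, show (u - fun n => sSup (S n)) n = u n - sSup (S n) from rfl]

lemma liminf_limsup_csInf_csSup_subset (hne : ∀ n, (S n).Nonempty) (hS : ∀ n, S n ⊆ Icc a b) :
    ({liminf (fun n => sInf (S n)) atTop, limsup (fun n => sInf (S n)) atTop,
      liminf (fun n => sSup (S n)) atTop, limsup (fun n => sSup (S n)) atTop} : Set ℝ)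
        ⊆ selectionSpectrum S := by
  obtain ⟨u, hu, hu_tendsto⟩ := exists_tendsto_sub_csInf hne fun n => bddBelow_Icc.mono (hS n)
  obtain ⟨v, hv, hv_tendsto⟩ := exists_tendsto_sub_csSup hne fun n => bddAbove_Icc.mono (hS n)
  have hInf n : sInf (S n) ∈ Icc a b := csInf_mem_Icc_of_subset (hne n) (hS n)
  have hSup n : sSup (S n) ∈ Icc a b := csSup_mem_Icc_of_subset (hne n) (hS n)
  simp only [insert_subset_iff, singleton_subset_iff]
  refine ⟨?_, ?_, ?_, ?_⟩
  · exact liminf_eq_of_tendsto_sub hInf hu_tendsto ▸ liminf_mem hS hu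
  · exact limsup_eq_of_tendsto_sub hInf hu_tendsto ▸ limsup_mem hS hu
  · exact liminf_eq_of_tendsto_sub hSup hv_tendsto ▸ liminf_mem hS hv
  · exact limsup_eq_of_tendsto_sub hSup hv_tendsto ▸ limsup_mem hS hv

lemma Icc_subset_of_tendsto {v : ℕ → ℝ} {c c' : ℝ} (hS : ∀ n, S n ⊆ Icc a b)
    (hu : ∀ n, u n ∈ S n) (hv : ∀ n, v n ∈ S n)
    (hu_tendsto : Tendsto u atTop (𝓝 c)) (hv_tendsto : Tendsto v atTop (𝓝 c')) :
    Icc c c' ⊆ selectionSpectrum S := by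
  set w : ℕ → ℝ := fun n => if Even n then u n else v n
  have hw n : w n ∈ S n := by by_cases h : Even n <;> simp [w, h, hu n, hv n]
  have hw_Icc n : w n ∈ Icc a b := hS n (hw n)
  have heven : w ∘ (2 * ·) = u ∘ (2 * ·) := funext fun n => if_pos (even_two_mul n)
  have hodd : w ∘ (2 * · + 1) = v ∘ (2 * · + 1) :=
    funext fun n => if_neg (Nat.not_even_two_mul_add_one n)
  have htwo : Tendsto (2 * · : ℕ → ℕ) atTop atTop :=
    (strictMono_mul_left_of_pos two_pos).tendsto_atTop
  have htwo_succ : Tendsto (2 * · + 1 : ℕ → ℕ) atTop atTop :=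
    StrictMono.tendsto_atTop fun m n h => by omega
  rintro θ ⟨hcθ, hθc'⟩
  refine ⟨w, hw, ?_, ?_⟩
  · exact (liminf_le_of_tendsto_comp htwo hw_Icc (heven ▸ hu_tendsto.comp htwo)).trans hcθ
  · exact hθc'.trans (le_limsup_of_tendsto_comp htwo_succ hw_Icc (hodd ▸ hv_tendsto.comp htwo_succ))

lemma Icc_subset_of_tendsto_csInf_csSup {c c' : ℝ} (hne : ∀ n, (S n).Nonempty)
    (hS : ∀ n, S n ⊆ Icc a b) (hInf : Tendsto (fun n => sInf (S n)) atTop (𝓝 c))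
    (hSup : Tendsto (fun n => sSup (S n)) atTop (𝓝 c')) :
    Icc c c' ⊆ selectionSpectrum S := by
  obtain ⟨u, hu, hu_tendsto⟩ := exists_tendsto_sub_csInf hne fun n => bddBelow_Icc.mono (hS n)
  obtain ⟨v, hv, hv_tendsto⟩ := exists_tendsto_sub_csSup hne fun n => bddAbove_Icc.mono (hS n)
  refine Icc_subset_of_tendsto hS hu hv ?_ ?_
  · simpa using hu_tendsto.add hInf
  · simpa using hv_tendsto.add hSup

end selectionSpectrum

lemma exists_submodule_finrank_eq {K V : Type*} [DivisionRing K] [AddCommGroup V] [Module K V]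
    [FiniteDimensional K V] {s : ℕ} (hs : s ≤ Module.finrank K V) :
    ∃ W : Submodule K V, Module.finrank K W = s := by
  let b := Module.finBasis K V
  refine ⟨Submodule.span K (range (b ∘ Fin.castLE hs)), ?_⟩
  rw [finrank_span_eq_card (b.linearIndependent.comp _ (Fin.castLE_injective hs))]
  simp

section Angles

variable {d : ℕ}

lemma subAngle_nonneg (V W : Submodule ℝ (Euc d)) : 0 ≤ subAngle V W :=
  Real.arccos_nonneg _

/-- Testing a unit vector `v` against both `w` and `-w` shows `sup_w ⟪v, w⟫ ≥ 0`. -/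
lemma subAngle_le_pi_div_two (V : Submodule ℝ (Euc d)) {W : Submodule ℝ (Euc d)} (hW : W ≠ ⊥) :
    subAngle V W ≤ Real.pi / 2 := by
  obtain ⟨x, hxW, hx⟩ := Submodule.exists_mem_ne_zero_of_ne_bot hW
  set w := (‖x‖⁻¹ : ℝ) • x
  have hw : ‖w‖ = 1 := norm_smul_inv_norm hx
  refine Real.arccos_le_pi_div_two.2 (Real.sInf_nonneg ?_)
  rintro _ ⟨v, -, hv, rfl⟩
  have hbdd : BddAbove {y : ℝ | ∃ w ∈ W, ‖w‖ = 1 ∧ y = ⟪v, w⟫} := by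
    refine ⟨1, ?_⟩
    rintro _ ⟨w, -, hw, rfl⟩
    simpa [hv, hw] using real_inner_le_norm v w
  rcases le_total 0 ⟪v, w⟫ with h | h
  · exact h.trans (le_csSup hbdd ⟨w, W.smul_mem _ hxW, hw, rfl⟩)
  · refine (le_csSup hbdd ⟨-w, W.neg_mem (W.smul_mem _ hxW), by rwa [norm_neg], rfl⟩).trans' ?_
    rwa [inner_neg_right, neg_nonneg]

lemma alphaAvg_mem_Icc (A : ℕ → Euc d ≃L[ℝ] Euc d) {V : Submodule ℝ (Euc d)} (hV : V ≠ ⊥)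
    (n : ℕ) : alphaAvg A V n ∈ Icc 0 (Real.pi / 2) := by
  have hterm j : subAngle (V.map ((PhiN A j : Op d) : Euc d →ₗ[ℝ] Euc d))
      (V.map ((PhiN A (j + 1) : Op d) : Euc d →ₗ[ℝ] Euc d)) ∈ Icc 0 (Real.pi / 2) :=
    ⟨subAngle_nonneg _ _, subAngle_le_pi_div_two _ fun h =>
      hV (Submodule.map_eq_bot_iff (e := (PhiN A (j + 1)).toLinearEquiv).1 h)⟩
  rcases n.eq_zero_or_pos with rfl | hn
  · simp only [alphaAvg, Finset.range_zero, Finset.sum_empty, mul_zero]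
    exact ⟨le_rfl, by positivity⟩
  refine ⟨mul_nonneg (by positivity) (Finset.sum_nonneg fun j _ => (hterm j).1),
    (inv_mul_le_iff₀ (by positivity)).2 ?_⟩
  simpa using Finset.sum_le_card_nsmul (Finset.range n) _ _ fun j _ => (hterm j).2

variable (A : ℕ → Euc d ≃L[ℝ] Euc d) {s : ℕ}

def alphaSet (s n : ℕ) : Set ℝ :=
  {x | ∃ V : Submodule ℝ (Euc d), Module.finrank ℝ V = s ∧ x = alphaAvg A V n}

lemma alphaSet_nonempty (hsd : s ≤ d) (n : ℕ) : (alphaSet A s n).Nonempty := by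
  obtain ⟨V, hV⟩ := exists_submodule_finrank_eq (K := ℝ) (V := Euc d) (s := s)
    (by rwa [finrank_euclideanSpace_fin])
  exact ⟨_, V, hV, rfl⟩

lemma alphaSet_subset_Icc (hs : 1 ≤ s) (n : ℕ) : alphaSet A s n ⊆ Icc 0 (Real.pi / 2) := by
  rintro _ ⟨V, hV, rfl⟩
  exact alphaAvg_mem_Icc A (Submodule.one_le_finrank_iff.1 (hV ▸ hs)) n

lemma angSpecN_subset_angSpecInN (s : ℕ) : angSpecN A s ⊆ angSpecInN A s :=
  closure_mono fun _ ⟨h0, hpi, V, hV, hlow, hup⟩ => ⟨h0, hpi, fun _ => V, fun _ => hV, hlow, hup⟩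

lemma angSpecInN_eq_closure (hs : 1 ≤ s) :
    angSpecInN A s = closure (selectionSpectrum (alphaSet A s)) := by
  refine congrArg closure (ext fun θ => ⟨?_, fun hθ => ?_⟩)
  · rintro ⟨-, -, Vs, hVs, hlow, hup⟩
    exact ⟨fun n => alphaAvg A (Vs n) n, fun n => ⟨Vs n, hVs n, rfl⟩, hlow, hup⟩
  · obtain ⟨h0, hpi⟩ := selectionSpectrum.subset_Icc (alphaSet_subset_Icc A hs) hθ
    obtain ⟨u, hu, hlow, hup⟩ := hθ
    choose Vs hVs hu using hu
    obtain rfl : u = fun n => alphaAvg A (Vs n) n := funext hu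
    exact ⟨h0, hpi, Vs, hVs, hlow, hup⟩

end Angles

theorem statement19_general {d s : ℕ} (A : ℕ → Euc d ≃L[ℝ] Euc d)
    (hs : 1 ≤ s) (hsd : s ≤ d) :
    liminf (innerInf A s) atTop ≤ limsup (innerInf A s) atTop ∧
    liminf (innerInf A s) atTop ≤ liminf (innerSup A s) atTop ∧
    limsup (innerInf A s) atTop ≤ limsup (innerSup A s) atTop ∧
    liminf (innerSup A s) atTop ≤ limsup (innerSup A s) atTop ∧
    angSpecN A s ⊆ angSpecInN A s ∧
    ({liminf (innerInf A s) atTop, limsup (innerInf A s) atTop,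
      liminf (innerSup A s) atTop, limsup (innerSup A s) atTop} : Set ℝ)
        ⊆ angSpecInN A s ∧
    angSpecInN A s ⊆
      Set.Icc (liminf (innerInf A s) atTop) (limsup (innerSup A s) atTop) ∧
    (liminf (innerInf A s) atTop = limsup (innerInf A s) atTop →
      liminf (innerSup A s) atTop = limsup (innerSup A s) atTop →
      angSpecInN A s =
        Set.Icc (liminf (innerInf A s) atTop) (limsup (innerSup A s) atTop)) := by
  have hne := alphaSet_nonempty A hsd
  have hS := alphaSet_subset_Icc A hs
  have hInf n : innerInf A s n ∈ Icc 0 (Real.pi / 2) := csInf_mem_Icc_of_subset (hne n) (hS n)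
  have hSup n : innerSup A s n ∈ Icc 0 (Real.pi / 2) := csSup_mem_Icc_of_subset (hne n) (hS n)
  have hInf_le_Sup n : innerInf A s n ≤ innerSup A s n :=
    csInf_le_csSup (hne n) (bddBelow_Icc.mono (hS n)) (bddAbove_Icc.mono (hS n))
  have hspec_Icc : angSpecInN A s ⊆
      Icc (liminf (innerInf A s) atTop) (limsup (innerSup A s) atTop) := by
    rw [angSpecInN_eq_closure A hs]
    exact closure_minimal (selectionSpectrum.subset_Icc_liminf_csInf_limsup_csSup hS) isClosed_Icc
  refine ⟨liminf_le_limsup_of_forall_mem_Icc hInf,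
    liminf_le_liminf_of_forall_le (fun n => (hInf n).1) (fun n => (hSup n).2) hInf_le_Sup,
    limsup_le_limsup_of_forall_le (fun n => (hInf n).1) (fun n => (hSup n).2) hInf_le_Sup,
    liminf_le_limsup_of_forall_mem_Icc hSup, angSpecN_subset_angSpecInN A s, ?_, hspec_Icc, ?_⟩
  · rw [angSpecInN_eq_closure A hs]
    exact (selectionSpectrum.liminf_limsup_csInf_csSup_subset hne hS).trans subset_closure
  · intro hInf_eq hSup_eq
    refine hspec_Icc.antisymm ?_
    rw [angSpecInN_eq_closure A hs]
    refine (selectionSpectrum.Icc_subset_of_tendsto_csInf_csSup hne hS ?_ ?_).trans subset_closure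
    · exact tendsto_liminf_of_liminf_eq_limsup hInf hInf_eq
    · exact hSup_eq ▸ tendsto_liminf_of_liminf_eq_limsup hSup hSup_eq

/-- ordering of the inner angular values; the outer angular spectrum
and the four inner angular values are contained in the inner angular spectrum;
`Σ_s^{in} ⊆ [θ_s^{liminf,inf}, θ_s^{limsup,sup}]`; and if liminf and limsup
coincide, then `Σ_s^{in}` equals its maximal interval. -/
theorem statement19 {d s : ℕ} (A : ℕ → Euc d ≃L[ℝ] Euc d)
    (hbd : ∃ M : ℝ, ∀ n : ℕ, ‖(A n : Op d)‖ ≤ M ∧ ‖((A n).symm : Op d)‖ ≤ M)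
    (hs : 1 ≤ s) (hsd : s ≤ d) :
    liminf (innerInf A s) atTop ≤ limsup (innerInf A s) atTop ∧
    liminf (innerInf A s) atTop ≤ liminf (innerSup A s) atTop ∧
    limsup (innerInf A s) atTop ≤ limsup (innerSup A s) atTop ∧
    liminf (innerSup A s) atTop ≤ limsup (innerSup A s) atTop ∧
    angSpecN A s ⊆ angSpecInN A s ∧
    ({liminf (innerInf A s) atTop, limsup (innerInf A s) atTop,
      liminf (innerSup A s) atTop, limsup (innerSup A s) atTop} : Set ℝ)
        ⊆ angSpecInN A s ∧
    angSpecInN A s ⊆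
      Set.Icc (liminf (innerInf A s) atTop) (limsup (innerSup A s) atTop) ∧
    (liminf (innerInf A s) atTop = limsup (innerInf A s) atTop →
      liminf (innerSup A s) atTop = limsup (innerSup A s) atTop →
      angSpecInN A s =
        Set.Icc (liminf (innerInf A s) atTop) (limsup (innerSup A s) atTop)) :=
  statement19_general A hs hsd
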